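/- Let A be a process executing the quasi rendezvous protocol. Whatever the execution, A writes an infinite number of times into each of its Write registers Write_{AB_i}, for every neighbour B_i of A. -/

import Mathlib

/-!
An operational model of the quasi rendezvous protocol of Johnen, Lavallée, Lavault.

Each process `A` owns, for each neighbour `B_i`, a register `Write_{AB_i}` and two
one-bit registers `Control_{AB_i}` and `CheckControl_{AB_i}`; communication is under
read/write atomicity.
-/

structure Network where
  Proc : Type
  deg : Proc → ℕ
  deg_pos : ∀ p, 0 < deg p
  nbr : (p : Proc) → Fin (deg p) → Proc
  nbr_ne : ∀ p i, nbr p i ≠ p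
  nbr_inj : ∀ p, Function.Injective (nbr p)
  nbr_symm : ∀ p i, ∃ j, nbr (nbr p i) j = p

namespace QR

open Classical

/-- Program counter of a process with `n` neighbours running the quasi rendezvous
protocol.  `wr i k` : writing phase, neighbour `i`, sub-action `k`
(`k = 0`: `write(Write_{AB_i}, get_i)`, `k = 1`: `c_i ← read(Control_{AB_i})`,
`k = 2`: `write(Control_{AB_i}, (c_i+1) mod 2)`);
`lp i k` : repeat loop, neighbour `i`, sub-action `k`
(`k = 0`: `b_i ← read(Control_{B_iA})`, `k = 1`: `d_i ← read(CheckControl_{AB_i})`,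
then if `b_i ≠ d_i` continue with `k = 2`: `r_i ← read(Write_{B_iA})` and
`k = 3`: `write(CheckControl_{AB_i}, b_i)`, else jump to `k = 4`;
`k = 4`: `c_i ← read(Control_{AB_i})`, `k = 5`: `l_i ← read(CheckControl_{B_iA})`,
followed, after the last neighbour, by the (local) exit test `∀ i, c_i = l_i`). -/
inductive PC (n : ℕ) : Type
  | wr : Fin n → Fin 3 → PC n
  | lp : Fin n → Fin 6 → PC n

/-- An atomic action (read/write atomicity); `A B` names the owner and the direction
of the register, e.g. `readC A B` is a read of `Control_{AB}` and `writeCC A B b`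
writes the bit `b` into `CheckControl_{AB}`. -/
inductive Act (Proc Val : Type) : Type
  | readW : Proc → Proc → Act Proc Val
  | writeW : Proc → Proc → Val → Act Proc Val
  | readC : Proc → Proc → Act Proc Val
  | writeC : Proc → Proc → Bool → Act Proc Val
  | readCC : Proc → Proc → Act Proc Val
  | writeCC : Proc → Proc → Bool → Act Proc Val

/-- A configuration: register contents and local states (pc and local variables
`r_i`, `b_i`, `d_i`, `c_i`, `l_i`). -/
structure Config (Net : Network) (Val : Type) : Type where
  regW : Net.Proc → Net.Proc → Val
  regC : Net.Proc → Net.Proc → Bool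
  regCC : Net.Proc → Net.Proc → Bool
  pc : (p : Net.Proc) → PC (Net.deg p)
  rv : (p : Net.Proc) → Fin (Net.deg p) → Val
  bv : (p : Net.Proc) → Fin (Net.deg p) → Bool
  dv : (p : Net.Proc) → Fin (Net.deg p) → Bool
  cv : (p : Net.Proc) → Fin (Net.deg p) → Bool
  lv : (p : Net.Proc) → Fin (Net.deg p) → Bool

def finSucc? {n : ℕ} (i : Fin n) : Option (Fin n) :=
  if h : i.1 + 1 < n then some ⟨i.1 + 1, h⟩ else none

noncomputable def upd2 {Proc : Type} {β : Type} (f : Proc → Proc → β) (a b : Proc) (v : β) :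
    Proc → Proc → β :=
  fun x y => if x = a ∧ y = b then v else f x y

/-- One atomic step of process `p`, labelled by the action performed.  The value
written by `write(Write_{AB_i}, get_i)` is arbitrary (`get_i` is an arbitrary helper
function returning the next message). -/
inductive Step (Net : Network) (Val : Type) :
    Config Net Val → Net.Proc → Act Net.Proc Val → Config Net Val → Prop
  | writeW (c : Config Net Val) (p : Net.Proc) (i : Fin (Net.deg p)) (v : Val)
      (h : c.pc p = .wr i 0) :
      Step Net Val c p (.writeW p (Net.nbr p i) v)
        { c with
          regW := upd2 c.regW p (Net.nbr p i) v
          pc := Function.update c.pc p (PC.wr i 1) }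
  | readOwnC (c : Config Net Val) (p : Net.Proc) (i : Fin (Net.deg p))
      (h : c.pc p = .wr i 1) :
      Step Net Val c p (.readC p (Net.nbr p i))
        { c with
          cv := Function.update c.cv p (Function.update (c.cv p) i (c.regC p (Net.nbr p i)))
          pc := Function.update c.pc p (PC.wr i 2) }
  | writeOwnC (c : Config Net Val) (p : Net.Proc) (i : Fin (Net.deg p))
      (h : c.pc p = .wr i 2) :
      Step Net Val c p (.writeC p (Net.nbr p i) (!(c.cv p i)))
        { c with
          regC := upd2 c.regC p (Net.nbr p i) (!(c.cv p i))
          pc := Function.update c.pc p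
            (match finSucc? i with
             | some j => PC.wr j 0
             | none => PC.lp ⟨0, Net.deg_pos p⟩ 0) }
  | readNbrC (c : Config Net Val) (p : Net.Proc) (i : Fin (Net.deg p))
      (h : c.pc p = .lp i 0) :
      Step Net Val c p (.readC (Net.nbr p i) p)
        { c with
          bv := Function.update c.bv p (Function.update (c.bv p) i (c.regC (Net.nbr p i) p))
          pc := Function.update c.pc p (PC.lp i 1) }
  | readOwnCC (c : Config Net Val) (p : Net.Proc) (i : Fin (Net.deg p))
      (h : c.pc p = .lp i 1) :
      Step Net Val c p (.readCC p (Net.nbr p i))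
        { c with
          dv := Function.update c.dv p
            (Function.update (c.dv p) i (c.regCC p (Net.nbr p i)))
          pc := Function.update c.pc p
            (if c.bv p i ≠ c.regCC p (Net.nbr p i) then PC.lp i 2 else PC.lp i 4) }
  | readNbrW (c : Config Net Val) (p : Net.Proc) (i : Fin (Net.deg p))
      (h : c.pc p = .lp i 2) :
      Step Net Val c p (.readW (Net.nbr p i) p)
        { c with
          rv := Function.update c.rv p (Function.update (c.rv p) i (c.regW (Net.nbr p i) p))
          pc := Function.update c.pc p (PC.lp i 3) }
  | writeOwnCC (c : Config Net Val) (p : Net.Proc) (i : Fin (Net.deg p))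
      (h : c.pc p = .lp i 3) :
      Step Net Val c p (.writeCC p (Net.nbr p i) (c.bv p i))
        { c with
          regCC := upd2 c.regCC p (Net.nbr p i) (c.bv p i)
          pc := Function.update c.pc p (PC.lp i 4) }
  | readOwnC' (c : Config Net Val) (p : Net.Proc) (i : Fin (Net.deg p))
      (h : c.pc p = .lp i 4) :
      Step Net Val c p (.readC p (Net.nbr p i))
        { c with
          cv := Function.update c.cv p (Function.update (c.cv p) i (c.regC p (Net.nbr p i)))
          pc := Function.update c.pc p (PC.lp i 5) }
  | readNbrCC (c : Config Net Val) (p : Net.Proc) (i : Fin (Net.deg p))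
      (h : c.pc p = .lp i 5) :
      Step Net Val c p (.readCC (Net.nbr p i) p)
        { c with
          lv := Function.update c.lv p (Function.update (c.lv p) i (c.regCC (Net.nbr p i) p))
          pc := Function.update c.pc p
            (match finSucc? i with
             | some j => PC.lp j 0
             | none =>
               if ∀ j, c.cv p j = Function.update (c.lv p) i (c.regCC (Net.nbr p i) p) j
               then PC.wr ⟨0, Net.deg_pos p⟩ 0
               else PC.lp ⟨0, Net.deg_pos p⟩ 0) }

/-- An execution: an infinite sequence of configurations, starting from an arbitrary
configuration, where at instant `t` the scheduled process performs one atomic action. -/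
structure Exec (Net : Network) (Val : Type) : Type where
  cfg : ℕ → Config Net Val
  sched : ℕ → Net.Proc
  act : ℕ → Act Net.Proc Val
  step : ∀ t, Step Net Val (cfg t) (sched t) (act t) (cfg (t + 1))

def Enabled {Net : Network} {Val : Type} (c : Config Net Val) (p : Net.Proc) : Prop :=
  ∃ a c', Step Net Val c p a c'

/-- Fair scheduler: any process that can continuously perform an action eventually
performs one. -/
def Exec.Fair {Net : Network} {Val : Type} (e : Exec Net Val) : Prop :=
  ∀ p t, (∀ u, t ≤ u → Enabled (e.cfg u) p) → ∃ u, t ≤ u ∧ e.sched u = p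

/-- The program counter of `p` is inside the repeat loop. -/
def InLoop {Net : Network} {Val : Type} (c : Config Net Val) (p : Net.Proc) : Prop :=
  ∃ i k, c.pc p = PC.lp i k

/-- In the quasi rendezvous protocol, `B` allows `A` to write iff
`CheckControl_{BA} = Control_{AB}`. -/
def Allows {Net : Network} {Val : Type} (c : Config Net Val) (B A : Net.Proc) : Prop :=
  c.regCC B A = c.regC A B

/-- `B` is a neighbour of `A`. -/
def Neighbour (Net : Network) (A B : Net.Proc) : Prop := ∃ i, Net.nbr A i = B

/-- At instant `t`, process `A` writes (some value) into its register `Write_{AB}`. -/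
def WritesW {Net : Network} {Val : Type} (e : Exec Net Val) (A B : Net.Proc) (t : ℕ) : Prop :=
  e.sched t = A ∧ ∃ v, e.act t = Act.writeW A B v

/-- At instant `t`, process `B` reads from the register `Write_{AB}` of its neighbour `A`. -/
def ReadsW {Net : Network} {Val : Type} (e : Exec Net Val) (A B : Net.Proc) (t : ℕ) : Prop :=
  e.sched t = B ∧ e.act t = Act.readW A B

/-- Process `P` has executed (at least) its first three atomic actions before
instant `t`. -/
def DidThree {Net : Network} {Val : Type} (e : Exec Net Val) (P : Net.Proc) (t : ℕ) : Prop :=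
  ∃ u1 u2 u3, u1 < u2 ∧ u2 < u3 ∧ u3 < t ∧
    e.sched u1 = P ∧ e.sched u2 = P ∧ e.sched u3 = P

/-- `A` performs a full (complete) writing of `Write_{AB}` at instants
`t1 < t2 < t3` (with no other action of `A` in between): the sequence
`write(Write_{AB}, get)`; `c ← read(Control_{AB})`;
`write(Control_{AB}, (c+1) mod 2)`. -/
def FullWriting {Net : Network} {Val : Type} (e : Exec Net Val) (A B : Net.Proc)
    (t1 t2 t3 : ℕ) : Prop :=
  t1 < t2 ∧ t2 < t3 ∧
  e.sched t1 = A ∧ e.sched t2 = A ∧ e.sched t3 = A ∧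
  (∃ v, e.act t1 = Act.writeW A B v) ∧
  e.act t2 = Act.readC A B ∧
  e.act t3 = Act.writeC A B (!(e.cfg t2).regC A B) ∧
  (∀ u, t1 < u → u < t3 → u ≠ t2 → e.sched u ≠ A)

end QR

/-!
Suppose that from some time on `A` never writes `Write_{AB_i}`. Then `A` never leaves the repeat
loop again, since leaving it leads straight through `write(Write_{AB_i}, get_i)`; so `A` no
longer writes its `Control` registers, which are eventually constant, say equal to `κ`. Every
local copy in the protocol either keeps its value or copies its source register, and fairness
makes it copy infinitely often; hence along the chains
`Control_{AB} → b_B → CheckControl_{BA} → l_A` and `Control_{AB} → c_A` everything stabilises at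
`κ`. The exit test `∀ i, c_i = l_i` then succeeds at the next pass, and `A` leaves the loop after
all.
-/

open Filter

lemma eventually_eq_of_frequently_copies {α : Type*} {f g : ℕ → α} {a : α}
    (hg : ∀ᶠ u in atTop, g u = a) (hstep : ∀ u, f (u + 1) = f u ∨ f (u + 1) = g u)
    (hcopy : ∃ᶠ u in atTop, f (u + 1) = g u) : ∀ᶠ u in atTop, f u = a := by
  obtain ⟨N, hN⟩ := eventually_atTop.mp hg
  obtain ⟨s, hs, hfs⟩ := frequently_atTop.mp hcopy N
  refine eventually_atTop.mpr ⟨s + 1, fun u hu => ?_⟩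
  induction u, hu using Nat.le_induction with
  | base => exact hfs.trans (hN s hs)
  | succ v hv ih => exact (hstep v).elim (·.trans ih) (·.trans (hN v (by omega)))

lemma Function.update_update_apply_eq_or {ι : Type*} [DecidableEq ι] {σ : ι → Type*}
    [∀ x, DecidableEq (σ x)] {β : Type*} (f g : (x : ι) → σ x → β) (q : ι) (i : σ q) (p : ι)
    (j : σ p) :
    Function.update f q (Function.update (f q) i (g q i)) p j = f p j ∨
      Function.update f q (Function.update (f q) i (g q i)) p j = g p j := by
  by_cases hpq : p = q
  · subst hpq
    by_cases hij : j = i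
    · subst hij; simp
    · simp [hij]
  · simp [hpq]

namespace QR

open Classical

variable {Net : Network} {Val : Type}

lemma finSucc?_of_lt {n : ℕ} (i : Fin n) (h : i.1 + 1 < n) : finSucc? i = some ⟨i.1 + 1, h⟩ :=
  dif_pos h

lemma finSucc?_of_not_lt {n : ℕ} (i : Fin n) (h : ¬ i.1 + 1 < n) : finSucc? i = none :=
  dif_neg h

lemma enabled (c : Config Net Val) (p : Net.Proc) : Enabled c p := by
  rcases hpc : c.pc p with ⟨i, k⟩ | ⟨i, k⟩ <;> fin_cases k
  · exact ⟨_, _, .writeW c p i (c.regW p p) hpc⟩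
  · exact ⟨_, _, .readOwnC c p i hpc⟩
  · exact ⟨_, _, .writeOwnC c p i hpc⟩
  · exact ⟨_, _, .readNbrC c p i hpc⟩
  · exact ⟨_, _, .readOwnCC c p i hpc⟩
  · exact ⟨_, _, .readNbrW c p i hpc⟩
  · exact ⟨_, _, .writeOwnCC c p i hpc⟩
  · exact ⟨_, _, .readOwnC' c p i hpc⟩
  · exact ⟨_, _, .readNbrCC c p i hpc⟩

namespace Step

variable {c c' : Config Net Val} {p q : Net.Proc} {a : Act Net.Proc Val}

lemma pc_eq_of_ne (h : Step Net Val c q a c') (hpq : p ≠ q) : c'.pc p = c.pc p := by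
  cases h <;> simp [hpq]

lemma cv_eq_or (h : Step Net Val c q a c') (j : Fin (Net.deg p)) :
    c'.cv p j = c.cv p j ∨ c'.cv p j = c.regC p (Net.nbr p j) := by
  cases h <;>
  first
  | exact .inl rfl
  | exact Function.update_update_apply_eq_or _ (fun p j => c.regC p (Net.nbr p j)) _ _ _ _

lemma bv_eq_or (h : Step Net Val c q a c') (j : Fin (Net.deg p)) :
    c'.bv p j = c.bv p j ∨ c'.bv p j = c.regC (Net.nbr p j) p := by
  cases h <;>
  first
  | exact .inl rfl
  | exact Function.update_update_apply_eq_or _ (fun p j => c.regC (Net.nbr p j) p) _ _ _ _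

lemma lv_eq_or (h : Step Net Val c q a c') (j : Fin (Net.deg p)) :
    c'.lv p j = c.lv p j ∨ c'.lv p j = c.regCC (Net.nbr p j) p := by
  cases h <;>
  first
  | exact .inl rfl
  | exact Function.update_update_apply_eq_or _ (fun p j => c.regCC (Net.nbr p j) p) _ _ _ _

lemma regCC_eq_or (h : Step Net Val c q a c') (j : Fin (Net.deg p)) :
    c'.regCC p (Net.nbr p j) = c.regCC p (Net.nbr p j) ∨
      c'.regCC p (Net.nbr p j) = c.bv p j := by
  cases h with
  | writeOwnCC i =>
    simp only [upd2]
    split_ifs with hq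
    · obtain ⟨rfl, hij⟩ := hq
      exact .inr (by rw [Net.nbr_inj _ hij])
    · exact .inl rfl
  | _ => exact .inl rfl

lemma act_pc_of_wr0 (h : Step Net Val c p a c') {i} (hpc : c.pc p = .wr i 0) :
    (∃ v, a = .writeW p (Net.nbr p i) v) ∧ c'.pc p = .wr i 1 := by
  cases h <;> simp_all

lemma pc_of_wr1 (h : Step Net Val c p a c') {i} (hpc : c.pc p = .wr i 1) :
    c'.pc p = .wr i 2 := by
  cases h <;> simp_all

lemma pc_of_wr2 (h : Step Net Val c p a c') {i} (hpc : c.pc p = .wr i 2)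
    (hi : i.1 + 1 < Net.deg p) : c'.pc p = .wr ⟨i.1 + 1, hi⟩ 0 := by
  cases h <;> simp_all [finSucc?]

lemma bv_of_lp0 (h : Step Net Val c p a c') {i} (hpc : c.pc p = .lp i 0) :
    c'.bv p i = c.regC (Net.nbr p i) p := by
  cases h <;> simp_all

lemma pc_of_lp1 (h : Step Net Val c p a c') {i} (hpc : c.pc p = .lp i 1)
    (hne : c.bv p i ≠ c.regCC p (Net.nbr p i)) : c'.pc p = .lp i 2 := by
  cases h <;> simp_all

lemma pc_of_lp2 (h : Step Net Val c p a c') {i} (hpc : c.pc p = .lp i 2) :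
    c'.pc p = .lp i 3 := by
  cases h <;> simp_all

lemma regCC_of_lp3 (h : Step Net Val c p a c') {i} (hpc : c.pc p = .lp i 3) :
    c'.regCC p (Net.nbr p i) = c.bv p i := by
  cases h <;> simp_all [upd2]

lemma cv_of_lp4 (h : Step Net Val c p a c') {i} (hpc : c.pc p = .lp i 4) :
    c'.cv p i = c.regC p (Net.nbr p i) := by
  cases h <;> simp_all

lemma lv_of_lp5 (h : Step Net Val c p a c') {i} (hpc : c.pc p = .lp i 5) :
    c'.lv p i = c.regCC (Net.nbr p i) p := by
  cases h <;> simp_all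

lemma pc_of_lp5_exit (h : Step Net Val c p a c') {i} (hpc : c.pc p = .lp i 5)
    (hi : i.1 + 1 = Net.deg p) (hcv : c.cv p = c.lv p)
    (hcc : c.regCC (Net.nbr p i) p = c.lv p i) :
    c'.pc p = .wr ⟨0, Net.deg_pos p⟩ 0 := by
  have hexit : ∀ j, c.cv p j = Function.update (c.lv p) i (c.regCC (Net.nbr p i) p) j := by
    simp [hcv, hcc]
  cases h <;> simp_all [finSucc?]

lemma inLoop_or_pc_eq (h : Step Net Val c q a c') (hp : InLoop c p) :
    InLoop c' p ∨ c'.pc p = .wr ⟨0, Net.deg_pos p⟩ 0 := by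
  by_cases hpq : p = q
  · subst hpq
    obtain ⟨i, k, hpc⟩ := hp
    cases h <;> simp only [hpc, reduceCtorEq, InLoop, Function.update_self] at * <;>
      (repeat' split) <;> simp
  · left
    unfold InLoop
    rwa [h.pc_eq_of_ne hpq]

lemma regC_eq_of_inLoop (h : Step Net Val c q a c') (hp : InLoop c p) :
    c'.regC p = c.regC p := by
  obtain ⟨i, k, hpc⟩ := hp
  cases h with
  | writeOwnC j hq =>
    funext x
    simp only [upd2]
    split_ifs with hqx
    · obtain ⟨rfl, -⟩ := hqx
      simp [hpc] at hq
    · rfl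
  | _ => rfl

end Step

/- `pos` numbers the instructions in program order. A step advances it by one, except that the
test at `lp i 1` may skip `lp i 2` and `lp i 3` and the end of the loop jumps back; so the cyclic
distance to any other `lp i k` strictly decreases. -/
def PC.pos {n : ℕ} : PC n → ℕ
  | .wr j k => 3 * j + k
  | .lp j k => 3 * n + 6 * j + k

lemma PC.pos_injective {n : ℕ} : Function.Injective (PC.pos (n := n)) := by
  rintro (⟨j, k⟩ | ⟨j, k⟩) (⟨j', k'⟩ | ⟨j', k'⟩) h <;>
    simp only [PC.pos, PC.wr.injEq, PC.lp.injEq, Fin.ext_iff, reduceCtorEq] at h ⊢ <;> omega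

def PC.distTo {n : ℕ} (x τ : PC n) : ℕ :=
  if x.pos ≤ τ.pos then τ.pos - x.pos else 9 * n + τ.pos - x.pos

lemma Step.distTo_lt {c c' : Config Net Val} {p : Net.Proc} {a : Act Net.Proc Val}
    (h : Step Net Val c p a c') {i : Fin (Net.deg p)} {k : Fin 6} (hne : c.pc p ≠ .lp i k)
    (hk2 : k ≠ 2) (hk3 : k ≠ 3) :
    (c'.pc p).distTo (.lp i k) < (c.pc p).distTo (.lp i k) := by
  have hpos : (c.pc p).pos ≠ (PC.lp i k).pos := fun h => hne (PC.pos_injective h)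
  have := i.2
  have : k.1 < 6 := k.2
  have : k.1 ≠ 2 := fun h => hk2 (Fin.ext h)
  have : k.1 ≠ 3 := fun h => hk3 (Fin.ext h)
  cases h with
  | writeW j _ hpc | readOwnC j hpc | readNbrC j hpc | readOwnCC j hpc | readNbrW j hpc
  | writeOwnCC j hpc | readOwnC' j hpc | writeOwnC j hpc | readNbrCC j hpc =>
    have := j.2
    rw [hpc] at hpos
    rcases lt_or_ge (j.1 + 1) (Net.deg p) with hj | hj
    · simp only [hpc, Function.update_self, PC.distTo, finSucc?_of_lt j hj]
      split_ifs <;> simp only [PC.pos] at * <;> omega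
    · simp only [hpc, Function.update_self, PC.distTo, finSucc?_of_not_lt j (by omega)]
      split_ifs <;> simp only [PC.pos] at * <;> omega

lemma Exec.step_of_sched (e : Exec Net Val) {u : ℕ} {p : Net.Proc} (hs : e.sched u = p) :
    Step Net Val (e.cfg u) p (e.act u) (e.cfg (u + 1)) :=
  hs ▸ e.step u

lemma Exec.pc_eq_of_sched_ne (e : Exec Net Val) {p : Net.Proc} {t u : ℕ} (htu : t ≤ u)
    (hne : ∀ v, t ≤ v → v < u → e.sched v ≠ p) : (e.cfg u).pc p = (e.cfg t).pc p := by
  induction u, htu using Nat.le_induction with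
  | base => rfl
  | succ v hv ih =>
    rw [(e.step v).pc_eq_of_ne (hne v hv (by omega)).symm]
    exact ih fun w hw hwv => hne w hw (by omega)

namespace Exec.Fair

variable {e : Exec Net Val} (hf : e.Fair)
include hf

lemma exists_sched_pc_eq (p : Net.Proc) (t : ℕ) :
    ∃ u, t ≤ u ∧ e.sched u = p ∧ (e.cfg u).pc p = (e.cfg t).pc p := by
  have h : ∃ u, t ≤ u ∧ e.sched u = p := hf p t fun _ _ => enabled _ _
  obtain ⟨htu, hs⟩ := Nat.find_spec h
  exact ⟨Nat.find h, htu, hs,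
    e.pc_eq_of_sched_ne htu fun v htv hv hs => Nat.find_min h hv ⟨htv, hs⟩⟩

lemma frequently_sched_pc_eq (p : Net.Proc) (i : Fin (Net.deg p)) (k : Fin 6)
    (hk2 : k ≠ 2 := by decide) (hk3 : k ≠ 3 := by decide) :
    ∃ᶠ u in atTop, e.sched u = p ∧ (e.cfg u).pc p = .lp i k := by
  suffices h : ∀ d t, ((e.cfg t).pc p).distTo (.lp i k) = d →
      ∃ u, t ≤ u ∧ e.sched u = p ∧ (e.cfg u).pc p = .lp i k from
    frequently_atTop.mpr fun t => h _ t rfl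
  intro d
  induction d using Nat.strong_induction_on with
  | _ d ih =>
    intro t hd
    obtain ⟨u, htu, hs, hpc⟩ := hf.exists_sched_pc_eq p t
    by_cases hu : (e.cfg u).pc p = .lp i k
    · exact ⟨u, htu, hs, hu⟩
    have hlt := (e.step_of_sched hs).distTo_lt hu hk2 hk3
    rw [hpc, hd] at hlt
    obtain ⟨w, huw, hw⟩ := ih _ hlt (u + 1) rfl
    exact ⟨w, by omega, hw⟩

lemma frequently_bv_copies (p : Net.Proc) (j : Fin (Net.deg p)) :
    ∃ᶠ u in atTop, (e.cfg (u + 1)).bv p j = (e.cfg u).regC (Net.nbr p j) p :=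
  (hf.frequently_sched_pc_eq p j 0).mono
    fun _ ⟨hs, hpc⟩ => (e.step_of_sched hs).bv_of_lp0 hpc

lemma frequently_cv_copies (p : Net.Proc) (j : Fin (Net.deg p)) :
    ∃ᶠ u in atTop, (e.cfg (u + 1)).cv p j = (e.cfg u).regC p (Net.nbr p j) :=
  (hf.frequently_sched_pc_eq p j 4).mono
    fun _ ⟨hs, hpc⟩ => (e.step_of_sched hs).cv_of_lp4 hpc

lemma frequently_lv_copies (p : Net.Proc) (j : Fin (Net.deg p)) :
    ∃ᶠ u in atTop, (e.cfg (u + 1)).lv p j = (e.cfg u).regCC (Net.nbr p j) p :=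
  (hf.frequently_sched_pc_eq p j 5).mono
    fun _ ⟨hs, hpc⟩ => (e.step_of_sched hs).lv_of_lp5 hpc

lemma frequently_regCC_copies (p : Net.Proc) (j : Fin (Net.deg p)) :
    ∃ᶠ u in atTop, (e.cfg (u + 1)).regCC p (Net.nbr p j) = (e.cfg u).bv p j := by
  refine frequently_atTop.mpr fun t => ?_
  obtain ⟨u1, htu1, hs1, hpc1⟩ := frequently_atTop.mp
    (hf.frequently_sched_pc_eq p j 1) t
  by_cases heq : (e.cfg u1).bv p j = (e.cfg u1).regCC p (Net.nbr p j)
  · exact ⟨u1, htu1, ((e.step u1).regCC_eq_or j).elim (·.trans heq.symm) id⟩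
  obtain ⟨u2, hu12, hs2, hpc2⟩ := hf.exists_sched_pc_eq p (u1 + 1)
  rw [(e.step_of_sched hs1).pc_of_lp1 hpc1 heq] at hpc2
  obtain ⟨u3, hu23, hs3, hpc3⟩ := hf.exists_sched_pc_eq p (u2 + 1)
  rw [(e.step_of_sched hs2).pc_of_lp2 hpc2] at hpc3
  exact ⟨u3, by omega, (e.step_of_sched hs3).regCC_of_lp3 hpc3⟩

section StableControl

variable {A : Net.Proc} {κ : Net.Proc → Bool} (hC : ∀ᶠ u in atTop, (e.cfg u).regC A = κ)
include hC

lemma eventually_cv_eq (j : Fin (Net.deg A)) :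
    ∀ᶠ u in atTop, (e.cfg u).cv A j = κ (Net.nbr A j) :=
  eventually_eq_of_frequently_copies (hC.mono fun _ hu => congrFun hu _)
    (fun u => (e.step u).cv_eq_or j) (hf.frequently_cv_copies A j)

lemma eventually_regCC_eq (j : Fin (Net.deg A)) :
    ∀ᶠ u in atTop, (e.cfg u).regCC (Net.nbr A j) A = κ (Net.nbr A j) := by
  obtain ⟨j', hj'⟩ := Net.nbr_symm A j
  have hbv : ∀ᶠ u in atTop, (e.cfg u).bv (Net.nbr A j) j' = κ (Net.nbr A j) :=
    eventually_eq_of_frequently_copies (hC.mono fun _ hu => by rw [hj', hu])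
      (fun u => (e.step u).bv_eq_or j') (hf.frequently_bv_copies _ j')
  have hcc := eventually_eq_of_frequently_copies (f := fun u => (e.cfg u).regCC _ (Net.nbr _ j'))
    hbv (fun u => (e.step u).regCC_eq_or j') (hf.frequently_regCC_copies _ j')
  simpa only [hj'] using hcc

lemma eventually_lv_eq (j : Fin (Net.deg A)) :
    ∀ᶠ u in atTop, (e.cfg u).lv A j = κ (Net.nbr A j) :=
  eventually_eq_of_frequently_copies (hf.eventually_regCC_eq hC j)
    (fun u => (e.step u).lv_eq_or j) (hf.frequently_lv_copies A j)

end StableControl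

lemma exists_writesW_of_pc_wr0 {A : Net.Proc} {i j : Fin (Net.deg A)} (hji : j ≤ i) {t : ℕ}
    (hpc : (e.cfg t).pc A = .wr j 0) : ∃ u, t ≤ u ∧ WritesW e A (Net.nbr A i) u := by
  induction hd : i.1 - j.1 generalizing j t with
  | zero =>
    obtain ⟨u, htu, hs, hpcu⟩ := hf.exists_sched_pc_eq A t
    have hji : j = i := le_antisymm hji (Fin.le_def.mpr (by omega))
    subst hji
    exact ⟨u, htu, hs, ((e.step_of_sched hs).act_pc_of_wr0 (hpcu.trans hpc)).1⟩
  | succ d ih =>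
    have hj : j.1 + 1 < Net.deg A := by have := i.2; omega
    obtain ⟨u1, htu1, hs1, hpc1⟩ := hf.exists_sched_pc_eq A t
    obtain ⟨u2, hu12, hs2, hpc2⟩ := hf.exists_sched_pc_eq A (u1 + 1)
    rw [((e.step_of_sched hs1).act_pc_of_wr0 (hpc1.trans hpc)).2] at hpc2
    obtain ⟨u3, hu23, hs3, hpc3⟩ := hf.exists_sched_pc_eq A (u2 + 1)
    rw [(e.step_of_sched hs2).pc_of_wr1 hpc2] at hpc3
    obtain ⟨u, hu, hw⟩ := ih (j := ⟨j.1 + 1, hj⟩)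
      (Fin.le_def.mpr (show j.1 + 1 ≤ i.1 by omega))
      ((e.step_of_sched hs3).pc_of_wr2 hpc3 hj) (show i.1 - (j.1 + 1) = d by omega)
    exact ⟨u, by omega, hw⟩

lemma eventually_inLoop {A : Net.Proc} {i : Fin (Net.deg A)}
    (h : ∀ᶠ u in atTop, ¬ WritesW e A (Net.nbr A i) u) :
    ∀ᶠ u in atTop, InLoop (e.cfg u) A := by
  obtain ⟨t, ht⟩ := eventually_atTop.mp h
  obtain ⟨T, htT, -, hpc⟩ := frequently_atTop.mp
    (hf.frequently_sched_pc_eq A ⟨0, Net.deg_pos A⟩ 0) t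
  refine eventually_atTop.mpr ⟨T, fun u hu => ?_⟩
  induction u, hu using Nat.le_induction with
  | base => exact ⟨_, _, hpc⟩
  | succ v hv ih =>
    refine ((e.step v).inLoop_or_pc_eq ih).resolve_right fun hwr => ?_
    obtain ⟨u, hu, hw⟩ := hf.exists_writesW_of_pc_wr0 (Fin.le_def.mpr (Nat.zero_le i.1)) hwr
    exact ht u (by omega) hw

end Exec.Fair

lemma Exec.exists_eventually_regC_eq_of_inLoop (e : Exec Net Val) {A : Net.Proc}
    (h : ∀ᶠ u in atTop, InLoop (e.cfg u) A) :
    ∃ κ, ∀ᶠ u in atTop, (e.cfg u).regC A = κ := by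
  obtain ⟨T, hT⟩ := eventually_atTop.mp h
  refine ⟨(e.cfg T).regC A, eventually_atTop.mpr ⟨T, fun u hu => ?_⟩⟩
  induction u, hu using Nat.le_induction with
  | base => rfl
  | succ v hv ih => exact ((e.step v).regC_eq_of_inLoop (hT v hv)).trans ih

end QR

open QR in
/-- Let `A` be a process executing the quasi rendezvous protocol.
Whatever the (fair) execution, `A` writes an infinite number of times into each of
its registers `Write_{AB_i}`, for every neighbour `B_i` of `A`. -/
theorem quasi_rendezvous_writes_infinitely_often (Net : Network) (Val : Type)
    (e : Exec Net Val) (hfair : e.Fair) (A : Net.Proc) (i : Fin (Net.deg A)) (t : ℕ) :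
    ∃ u, t ≤ u ∧ WritesW e A (Net.nbr A i) u := by
  refine frequently_atTop.mp ?_ t
  by_contra hfin
  have hloop := hfair.eventually_inLoop (not_frequently.mp hfin)
  obtain ⟨κ, hC⟩ := e.exists_eventually_regC_eq_of_inLoop hloop
  have hcv := eventually_all.mpr (hfair.eventually_cv_eq hC)
  have hlv := eventually_all.mpr (hfair.eventually_lv_eq hC)
  have hcc := eventually_all.mpr (hfair.eventually_regCC_eq hC)
  have hloop' := (tendsto_add_atTop_nat 1).eventually hloop
  have hlast : Net.deg A - 1 + 1 = Net.deg A := Nat.sub_add_cancel (Net.deg_pos A)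
  obtain ⟨u, ⟨hin, hcvu, hlvu, hccu⟩, hs, hpc⟩ :=
    ((hloop'.and (hcv.and (hlv.and hcc))).and_frequently
      (hfair.frequently_sched_pc_eq A ⟨Net.deg A - 1, by omega⟩ 5)).exists
  obtain ⟨_, _, hlp⟩ := hin
  rw [(e.step_of_sched hs).pc_of_lp5_exit hpc hlast (funext fun j => (hcvu j).trans (hlvu j).symm)
    ((hccu _).trans (hlvu _).symm)] at hlp
  cases hlp
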